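/- arXiv:0802.1098 — 4 statements merged into one kernel-verified Lean document; each statement's English description precedes it below -/
import Mathlib

section
/- The 5×5 differential-algebraic system with constraints v_{−2} − v_0 = 0 and v_2 − v_0 = 0, and ODEs dv_i/dt = (c/2 + d)v_{i−1} − 2d v_i + (−c/2 + d)v_{i+1} for i = −1, 0, 1, has exactly the eigenvalues 0, −2d, −4d (each simple), with corresponding eigenvectors (1,1,1,1,1), (0, c/2 − d, 0, c/2 + d, 0), and (1,−1,1,−1,1). -/
/-!
With the constraints the unknowns reduce to `v₁, v₂, v₃` (and `v₀ = v₄ = v₂`), and the side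
equations become `(λ + 2d) v₁ = 2d v₂ = (λ + 2d) v₃`. Multiplying the middle equation by
`λ + 2d` and substituting gives `λ (λ + 4d) v₂ = 0`, so away from `0, -2d, -4d` everything
vanishes. At `λ = 0` or `-4d` the side equations express `v₁, v₃` through `v₂`; at `λ = -2d`
they force `v₂ = 0`, and the middle equation leaves the one-dimensional solution set
`(c/2 + d) v₁ + (-c/2 + d) v₃ = 0`.
-/

/-- `v e^{λt}` solves the element system; `Fin 5` indexes `v_{-2}, …, v_2`. -/
def SolvesElementSystem (c d lam : ℝ) (v : Fin 5 → ℝ) : Prop :=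
  v 0 = v 2 ∧ v 4 = v 2 ∧
    lam * v 1 = (c / 2 + d) * v 0 - 2 * d * v 1 + (-c / 2 + d) * v 2 ∧
    lam * v 2 = (c / 2 + d) * v 1 - 2 * d * v 2 + (-c / 2 + d) * v 3 ∧
    lam * v 3 = (c / 2 + d) * v 2 - 2 * d * v 3 + (-c / 2 + d) * v 4

def IsListedEigenpair (c d lam : ℝ) (e : Fin 5 → ℝ) : Prop :=
  (lam = 0 ∧ e = ![1, 1, 1, 1, 1]) ∨
    (lam = -2 * d ∧ e = ![0, c / 2 - d, 0, c / 2 + d, 0]) ∨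
    (lam = -4 * d ∧ e = ![1, -1, 1, -1, 1])

lemma exists_eq_mul_neg_and_eq_mul {K : Type*} [Field K] {a b x y : K} (hab : a ≠ 0 ∨ b ≠ 0)
    (h : a * x + b * y = 0) : ∃ t, x = t * -b ∧ y = t * a := by
  rcases hab with ha | hb
  · refine ⟨y / a, ?_, by field_simp⟩
    field_simp
    linear_combination h
  · refine ⟨-x / b, by field_simp, ?_⟩
    field_simp
    linear_combination h

lemma funext_fin_five {α : Type*} {v w : Fin 5 → α} (h0 : v 0 = w 0) (h1 : v 1 = w 1)
    (h2 : v 2 = w 2) (h3 : v 3 = w 3) (h4 : v 4 = w 4) : v = w := by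
  funext i
  fin_cases i <;> assumption

namespace SolvesElementSystem

variable {c d lam : ℝ} {v : Fin 5 → ℝ}

lemma left_eq (h : SolvesElementSystem c d lam v) : (lam + 2 * d) * v 1 = 2 * d * v 2 := by
  linear_combination h.2.2.1 + (c / 2 + d) * h.1

lemma right_eq (h : SolvesElementSystem c d lam v) : (lam + 2 * d) * v 3 = 2 * d * v 2 := by
  linear_combination h.2.2.2.2 + (-c / 2 + d) * h.2.1

lemma mul_add_four_mul_mul_apply_two_eq_zero (h : SolvesElementSystem c d lam v) :
    lam * (lam + 4 * d) * v 2 = 0 := by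
  linear_combination (lam + 2 * d) * h.2.2.2.1 + (c / 2 + d) * h.left_eq +
    (-c / 2 + d) * h.right_eq

lemma eq_zero_of_ne (h : SolvesElementSystem c d lam v) (h0 : lam ≠ 0) (h2 : lam ≠ -2 * d)
    (h4 : lam ≠ -4 * d) : v = 0 := by
  have hl2 : lam + 2 * d ≠ 0 := fun h' => h2 (by linear_combination h')
  have hl4 : lam + 4 * d ≠ 0 := fun h' => h4 (by linear_combination h')
  have hv2 : v 2 = 0 := by
    simpa [h0, hl4] using h.mul_add_four_mul_mul_apply_two_eq_zero
  have hv1 : v 1 = 0 := by simpa [hv2, hl2] using h.left_eq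
  have hv3 : v 3 = 0 := by simpa [hv2, hl2] using h.right_eq
  exact funext_fin_five (h.1.trans hv2) hv1 hv2 hv3 (h.2.1.trans hv2)

lemma eq_smul_of_eigenvalue_zero (hd : d ≠ 0) (h : SolvesElementSystem c d 0 v) :
    v = v 2 • ![1, 1, 1, 1, 1] := by
  have hv1 : v 1 = v 2 := mul_left_cancel₀ (mul_ne_zero two_ne_zero hd) (by
    linear_combination h.left_eq)
  have hv3 : v 3 = v 2 := mul_left_cancel₀ (mul_ne_zero two_ne_zero hd) (by
    linear_combination h.right_eq)
  apply funext_fin_five <;> simp [h.1, h.2.1, hv1, hv3]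

lemma eq_smul_of_eigenvalue_neg_four (hd : d ≠ 0) (h : SolvesElementSystem c d (-4 * d) v) :
    v = v 2 • ![1, -1, 1, -1, 1] := by
  have hv1 : v 1 = -v 2 := mul_left_cancel₀ (mul_ne_zero two_ne_zero hd) (by
    linear_combination -h.left_eq)
  have hv3 : v 3 = -v 2 := mul_left_cancel₀ (mul_ne_zero two_ne_zero hd) (by
    linear_combination -h.right_eq)
  apply funext_fin_five <;> simp [h.1, h.2.1, hv1, hv3]

lemma exists_eq_smul_of_eigenvalue_neg_two (hd : d ≠ 0)
    (h : SolvesElementSystem c d (-2 * d) v) : ∃ t : ℝ, v = t • ![0, c / 2 - d, 0, c / 2 + d, 0] := by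
  have hv2 : v 2 = 0 := by simpa [hd] using h.left_eq.symm
  have hcoeff : c / 2 + d ≠ 0 ∨ -c / 2 + d ≠ 0 := by
    by_contra! h'
    exact hd (by linear_combination (h'.1 + h'.2) / 2)
  obtain ⟨t, hv1, hv3⟩ := exists_eq_mul_neg_and_eq_mul (x := v 1) (y := v 3) hcoeff (by
    linear_combination -h.2.2.2.1)
  replace hv1 : v 1 = t * (c / 2 - d) := by rw [hv1]; ring
  refine ⟨t, funext_fin_five ?_ ?_ ?_ ?_ ?_⟩ <;> simp [h.1, h.2.1, hv1, hv2, hv3]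

end SolvesElementSystem

namespace IsListedEigenpair

variable {c d lam : ℝ} {e : Fin 5 → ℝ}

lemma solves (h : IsListedEigenpair c d lam e) : SolvesElementSystem c d lam e := by
  rcases h with ⟨rfl, rfl⟩ | ⟨rfl, rfl⟩ | ⟨rfl, rfl⟩ <;>
    refine ⟨?_, ?_, ?_, ?_, ?_⟩ <;> simp <;> ring

lemma ne_zero (hd : d ≠ 0) (h : IsListedEigenpair c d lam e) : e ≠ 0 := by
  rcases h with ⟨-, rfl⟩ | ⟨-, rfl⟩ | ⟨-, rfl⟩ <;> intro he
  · simpa using congrFun he 0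
  · have h1 := congrFun he 1
    have h3 := congrFun he 3
    simp only [Matrix.cons_val, Pi.zero_apply] at h1 h3
    exact hd (by linear_combination (h3 - h1) / 2)
  · simpa using congrFun he 0

lemma exists_eq_smul (hd : d ≠ 0) (h : IsListedEigenpair c d lam e) {v : Fin 5 → ℝ}
    (hv : SolvesElementSystem c d lam v) : ∃ t : ℝ, v = t • e := by
  rcases h with ⟨rfl, rfl⟩ | ⟨rfl, rfl⟩ | ⟨rfl, rfl⟩
  · exact ⟨_, hv.eq_smul_of_eigenvalue_zero hd⟩
  · exact hv.exists_eq_smul_of_eigenvalue_neg_two hd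
  · exact ⟨_, hv.eq_smul_of_eigenvalue_neg_four hd⟩

end IsListedEigenpair

/-- Generalized eigenpairs of the 5×5 differential-algebraic element system:
indices `0,…,4` of `Fin 5` correspond to `v_{-2},…,v_2`.  A pair `(λ, v)` with
`v ≠ 0` satisfies the constraints `v_{-2} = v_0`, `v_2 = v_0` and
`λ v_i = (c/2+d) v_{i-1} − 2d v_i + (−c/2+d) v_{i+1}` for `i = -1,0,1`.
The eigenvalues are exactly `0, −2d, −4d`; each is simple, with the stated
eigenvectors. -/
theorem stmt5 (c d : ℝ) (hd : 0 < d) :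
    -- characterisation of the eigenvalues
    (∀ lam : ℝ,
      (∃ v : Fin 5 → ℝ, v ≠ 0 ∧ v 0 = v 2 ∧ v 4 = v 2 ∧
        lam * v 1 = (c / 2 + d) * v 0 - 2 * d * v 1 + (-c / 2 + d) * v 2 ∧
        lam * v 2 = (c / 2 + d) * v 1 - 2 * d * v 2 + (-c / 2 + d) * v 3 ∧
        lam * v 3 = (c / 2 + d) * v 2 - 2 * d * v 3 + (-c / 2 + d) * v 4)
      ↔ lam = 0 ∨ lam = -2 * d ∨ lam = -4 * d) ∧
    -- the stated eigenvectors (nonzero and satisfying constraints and ODEs)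
    (∀ (lam : ℝ) (e : Fin 5 → ℝ),
      ((lam = 0 ∧ e = ![1, 1, 1, 1, 1]) ∨
       (lam = -2 * d ∧ e = ![0, c / 2 - d, 0, c / 2 + d, 0]) ∨
       (lam = -4 * d ∧ e = ![1, -1, 1, -1, 1])) →
      e ≠ 0 ∧ e 0 = e 2 ∧ e 4 = e 2 ∧
        lam * e 1 = (c / 2 + d) * e 0 - 2 * d * e 1 + (-c / 2 + d) * e 2 ∧
        lam * e 2 = (c / 2 + d) * e 1 - 2 * d * e 2 + (-c / 2 + d) * e 3 ∧
        lam * e 3 = (c / 2 + d) * e 2 - 2 * d * e 3 + (-c / 2 + d) * e 4) ∧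
    -- simplicity: every eigenvector is a scalar multiple of the stated one
    (∀ (lam : ℝ) (e : Fin 5 → ℝ) (v : Fin 5 → ℝ),
      ((lam = 0 ∧ e = ![1, 1, 1, 1, 1]) ∨
       (lam = -2 * d ∧ e = ![0, c / 2 - d, 0, c / 2 + d, 0]) ∨
       (lam = -4 * d ∧ e = ![1, -1, 1, -1, 1])) →
      (v 0 = v 2 ∧ v 4 = v 2 ∧
        lam * v 1 = (c / 2 + d) * v 0 - 2 * d * v 1 + (-c / 2 + d) * v 2 ∧
        lam * v 2 = (c / 2 + d) * v 1 - 2 * d * v 2 + (-c / 2 + d) * v 3 ∧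
        lam * v 3 = (c / 2 + d) * v 2 - 2 * d * v 3 + (-c / 2 + d) * v 4) →
      ∃ a : ℝ, v = a • e) := by
  have hd0 : d ≠ 0 := hd.ne'
  have listed : ∀ lam e, IsListedEigenpair c d lam e →
      e ≠ 0 ∧ SolvesElementSystem c d lam e := fun _ _ h => ⟨h.ne_zero hd0, h.solves⟩
  refine ⟨fun lam => ⟨?_, ?_⟩, listed, fun _ _ _ h hv => IsListedEigenpair.exists_eq_smul hd0 h hv⟩
  · rintro ⟨v, hv, hsol⟩
    by_contra! hlam
    exact hv (SolvesElementSystem.eq_zero_of_ne hsol hlam.1 hlam.2.1 hlam.2.2)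
  · rintro (rfl | rfl | rfl)
    exacts [⟨_, listed _ _ (Or.inl ⟨rfl, rfl⟩)⟩, ⟨_, listed _ _ (Or.inr (Or.inl ⟨rfl, rfl⟩))⟩,
      ⟨_, listed _ _ (Or.inr (Or.inr ⟨rfl, rfl⟩))⟩]
end

section
/- For all real k with |k| ≤ π, all γ̄ ∈ [0,1], and all real 𝔠 (𝔠 = c/(2d)), the complex number z = 1 + γ̄[−(1 + 𝔠²)sin²(k/2) − 2i𝔠 sin(k/2)cos(k/2)] has a principal square root with 0 ≤ Re√z ≤ 1 when γ̄(1+𝔠²)sin²(k/2) along with the imaginary part keep z in the slit plane; in particular the eigenvalues λ_{1,3} = 2d(−1 ± √z) satisfy Re λ₁ ≤ 0 and Re λ₃ ≤ Re λ₁. -/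
/-!
Since `Re √z = √((‖z‖ + Re z) / 2)`, the bound `Re √z ≤ 1` is equivalent to `‖z‖ ≤ 2 - Re z`,
i.e. to `z` lying in the parabola `(Im z)² ≤ 4 (1 - Re z)`, the image of the half-plane
`Re w ≤ 1` under `w ↦ w²`. For the `z` of the theorem, `1 - Re z = γ̄(1 + 𝔠²) sin²(k/2)` and
`(Im z)² = 4 γ̄² 𝔠² sin²(k/2) cos²(k/2)`, which is smaller because `γ̄ ≤ 1` and `cos² ≤ 1`.
-/

open Complex

lemma Complex.norm_add_re_le_two {z : ℂ} (h : z.im ^ 2 ≤ 4 * (1 - z.re)) : ‖z‖ + z.re ≤ 2 := by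
  have hnorm : ‖z‖ ≤ 2 - z.re := by
    rw [norm_def, normSq_apply, Real.sqrt_le_iff]
    constructor <;> nlinarith [sq_nonneg z.im]
  linarith

lemma Complex.cpow_inv_two_re_le_one {z : ℂ} (h : z.im ^ 2 ≤ 4 * (1 - z.re)) :
    (z ^ (2⁻¹ : ℂ)).re ≤ 1 := by
  rw [cpow_inv_two_re, Real.sqrt_le_one]
  linarith [norm_add_re_le_two h]

lemma sq_two_mul_mul_sin_mul_cos_le {γ c θ : ℝ} (hγ : γ ∈ Set.Icc (0 : ℝ) 1) :
    (2 * γ * c * Real.sin θ * Real.cos θ) ^ 2 ≤ 4 * (γ * ((1 + c ^ 2) * Real.sin θ ^ 2)) := by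
  obtain ⟨hγ0, hγ1⟩ := hγ
  have hcos : Real.cos θ ^ 2 ≤ 1 := Real.cos_sq_le_one θ
  have hγ2 : γ ^ 2 ≤ γ := by nlinarith
  calc (2 * γ * c * Real.sin θ * Real.cos θ) ^ 2
      = 4 * γ ^ 2 * (c ^ 2 * Real.sin θ ^ 2) * Real.cos θ ^ 2 := by ring
    _ ≤ 4 * γ * (c ^ 2 * Real.sin θ ^ 2) * 1 := by gcongr
    _ ≤ 4 * (γ * ((1 + c ^ 2) * Real.sin θ ^ 2)) := by nlinarith [sq_nonneg (Real.sin θ)]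

theorem stmt9_general (k gam frakc d : ℝ)
    (hgam : gam ∈ Set.Icc (0 : ℝ) 1) (hd : 0 < d) :
    let z : ℂ := 1 + (gam : ℂ) *
      (-( (1 + frakc ^ 2 : ℝ) * Real.sin (k / 2) ^ 2 : ℝ)
        - 2 * I * (frakc : ℂ) * (Real.sin (k / 2) : ℂ) * (Real.cos (k / 2) : ℂ))
    let sqrtz : ℂ := z ^ ((1 : ℂ) / 2)
    0 ≤ sqrtz.re ∧ sqrtz.re ≤ 1 ∧
      ((2 * d : ℂ) * (-1 + sqrtz)).re ≤ 0 ∧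
      ((2 * d : ℂ) * (-1 - sqrtz)).re ≤ ((2 * d : ℂ) * (-1 + sqrtz)).re := by
  intro z sqrtz
  have hre : z.re = 1 - gam * ((1 + frakc ^ 2) * Real.sin (k / 2) ^ 2) := by
    simp only [z, add_re, mul_re, sub_re, neg_re, ofReal_re, ofReal_im, I_re, I_im, one_re,
      re_ofNat, im_ofNat]
    ring
  have him : z.im = -(2 * gam * frakc * Real.sin (k / 2) * Real.cos (k / 2)) := by
    simp only [z, add_im, mul_im, mul_re, sub_im, neg_im, ofReal_re, ofReal_im, I_re, I_im,
      one_im, re_ofNat, im_ofNat]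
    ring
  have hparabola : z.im ^ 2 ≤ 4 * (1 - z.re) := by
    rw [hre, him, neg_sq, sub_sub_cancel]
    exact sq_two_mul_mul_sin_mul_cos_le hgam
  have hsqrtz : sqrtz = z ^ (2⁻¹ : ℂ) := by norm_num [sqrtz]
  have hnonneg : 0 ≤ sqrtz.re := by
    rw [hsqrtz, cpow_inv_two_re]
    exact Real.sqrt_nonneg _
  have hle : sqrtz.re ≤ 1 := by
    rw [hsqrtz]
    exact cpow_inv_two_re_le_one hparabola
  have hcast : (2 * d : ℂ) = ((2 * d : ℝ) : ℂ) := by push_cast; rfl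
  refine ⟨hnonneg, hle, ?_, ?_⟩ <;>
    simp only [hcast, re_ofReal_mul, add_re, sub_re, neg_re, one_re] <;> nlinarith

open Complex in
/-- Spectral ordering of the coupled element dynamics: with
`z = 1 + γ̄[−(1+𝔠²)sin²(k/2) − 2i𝔠 sin(k/2)cos(k/2)]` and principal square
root `√z = z^{1/2}`, one has `0 ≤ Re √z ≤ 1`, so the eigenvalues
`λ₁ = 2d(−1 + √z)` and `λ₃ = 2d(−1 − √z)` satisfy `Re λ₁ ≤ 0` and
`Re λ₃ ≤ Re λ₁`. -/
theorem stmt9 (k gam frakc d : ℝ) (hk : |k| ≤ Real.pi)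
    (hgam : gam ∈ Set.Icc (0 : ℝ) 1) (hd : 0 < d) :
    let z : ℂ := 1 + (gam : ℂ) *
      (-( (1 + frakc ^ 2 : ℝ) * Real.sin (k / 2) ^ 2 : ℝ)
        - 2 * I * (frakc : ℂ) * (Real.sin (k / 2) : ℂ) * (Real.cos (k / 2) : ℂ))
    let sqrtz : ℂ := z ^ ((1 : ℂ) / 2)
    0 ≤ sqrtz.re ∧ sqrtz.re ≤ 1 ∧
      ((2 * d : ℂ) * (-1 + sqrtz)).re ≤ 0 ∧
      ((2 * d : ℂ) * (-1 - sqrtz)).re ≤ ((2 * d : ℂ) * (-1 + sqrtz)).re :=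
  stmt9_general k gam frakc d hgam hd
end

section
/- Let T be the 4×4 lower-triangular matrix of the coefficient coarsening map with diagonal entries 1/4, 1/16, 1/64, 1/256. Then for any initial coefficient vector c⁽⁰⁾ ∈ ℝ⁴ with first component c₁⁽⁰⁾ ≠ 0, the rescaled iterates 4^ℓ Tᐩℓ c⁽⁰⁾ converge as ℓ → ∞ to c₁⁽⁰⁾ · v, where v = (1, −1/12, 1/90, −1/560) is the eigenvector of T for its dominant eigenvalue 1/4. -/
/-!
`T` is lower triangular with distinct diagonal entries, so it has a basis of right eigenvectors
`rᵢ` with dual left eigenvectors `lᵢ`; the rank-one projections `rᵢ lᵢᵀ` resolve the identity, so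
`4ˡ Tˡ = ∑ᵢ (4λᵢ)ˡ rᵢ lᵢᵀ`. Every term but the dominant one decays geometrically, and the dominant
one applied to `c⁽⁰⁾` is `(l₀ ⬝ c⁽⁰⁾) r₀ = c₁⁽⁰⁾ v` because `l₀ = e₁`.
-/

open Filter Matrix Topology

theorem pow_eq_sum_pow_smul_of_mul_eq_smul {R A ι : Type*} [CommSemiring R] [Semiring A]
    [Algebra R A] [Fintype ι] (a : A) (p : ι → A) (c : ι → R) (hsum : ∑ i, p i = 1)
    (hp : ∀ i, a * p i = c i • p i) (k : ℕ) :
    a ^ k = ∑ i, c i ^ k • p i := by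
  have hpow : ∀ i, a ^ k * p i = c i ^ k • p i := by
    intro i
    induction k with
    | zero => simp
    | succ k ih => rw [pow_succ', mul_assoc, ih, mul_smul_comm, hp, smul_smul, pow_succ]
  calc a ^ k = a ^ k * ∑ i, p i := by rw [hsum, mul_one]
    _ = ∑ i, c i ^ k • p i := by simp only [Finset.mul_sum, hpow]

theorem tendsto_sum_pow_smul_of_abs_lt_one {ι E : Type*} [Fintype ι] [TopologicalSpace E]
    [AddCommMonoid E] [ContinuousAdd E] [Module ℝ E] [ContinuousSMul ℝ E]
    (μ : ι → ℝ) (x : ι → E) (i₀ : ι) (h₀ : μ i₀ = 1) (h : ∀ i ≠ i₀, |μ i| < 1) :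
    Tendsto (fun k : ℕ => ∑ i, μ i ^ k • x i) atTop (𝓝 (x i₀)) := by
  classical
  have hlimit : ∑ i, (if i = i₀ then x i else 0) = x i₀ := by simp
  rw [← hlimit]
  refine tendsto_finsetSum _ fun i _ => ?_
  split_ifs with hi
  · subst hi
    simpa [h₀] using tendsto_const_nhds
  · simpa using (tendsto_pow_atTop_nhds_zero_of_abs_lt_one (h i hi)).smul_const (x i)

namespace Coarsening

noncomputable def T : Matrix (Fin 4) (Fin 4) ℝ :=
  !![1/4, 0, 0, 0;
     -1/64, 1/16, 0, 0;
     1/512, -1/128, 1/64, 0;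
     -5/16384, 5/4096, -3/1024, 1/256]

noncomputable def eigenvalue : Fin 4 → ℝ := ![1/4, 1/16, 1/64, 1/256]

noncomputable def rightEigenvector : Fin 4 → Fin 4 → ℝ :=
  ![![1, -1/12, 1/90, -1/560], ![0, 1, -1/6, 7/240], ![0, 0, 1, -1/4], ![0, 0, 0, 1]]

noncomputable def leftEigenvector : Fin 4 → Fin 4 → ℝ :=
  ![![1, 0, 0, 0], ![1/12, 1, 0, 0], ![1/360, 1/6, 1, 0], ![1/20160, 1/80, 1/4, 1]]

noncomputable def projection (i : Fin 4) : Matrix (Fin 4) (Fin 4) ℝ :=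
  vecMulVec (rightEigenvector i) (leftEigenvector i)

theorem mulVec_rightEigenvector (i : Fin 4) :
    T *ᵥ rightEigenvector i = eigenvalue i • rightEigenvector i := by
  ext j
  fin_cases i <;> fin_cases j <;>
    simp [T, eigenvalue, rightEigenvector, mulVec, dotProduct, Fin.sum_univ_four] <;> norm_num

theorem sum_projection : ∑ i, projection i = 1 := by
  ext a b
  fin_cases a <;> fin_cases b <;>
    simp [projection, rightEigenvector, leftEigenvector, Fin.sum_univ_four, one_apply] <;> norm_num

theorem mul_projection (i : Fin 4) : T * projection i = eigenvalue i • projection i := by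
  rw [projection, mul_vecMulVec, mulVec_rightEigenvector, smul_vecMulVec]

theorem projection_zero_mulVec (c : Fin 4 → ℝ) :
    projection 0 *ᵥ c = c 0 • rightEigenvector 0 := by
  rw [projection, vecMulVec_mulVec]
  simp [leftEigenvector, dotProduct, Fin.sum_univ_four]

theorem four_smul_pow (k : ℕ) :
    ((4 : ℝ) • T) ^ k = ∑ i, (4 * eigenvalue i) ^ k • projection i :=
  pow_eq_sum_pow_smul_of_mul_eq_smul _ _ _ sum_projection
    (fun i => by rw [smul_mul_assoc, mul_projection, smul_smul]) k

end Coarsening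

open Coarsening in
/-- Power iteration of the coarsening matrix: for any initial coefficient
vector with nonzero first component, the rescaled iterates `4^ℓ T^ℓ c⁽⁰⁾`
converge to `c₁⁽⁰⁾ · v`, `v = (1, −1/12, 1/90, −1/560)`. -/
theorem stmt13 :
    let T : Matrix (Fin 4) (Fin 4) ℝ :=
      !![1/4, 0, 0, 0;
         -1/64, 1/16, 0, 0;
         1/512, -1/128, 1/64, 0;
         -5/16384, 5/4096, -3/1024, 1/256]
    let v : Fin 4 → ℝ := ![1, -1/12, 1/90, -1/560]
    ∀ c0 : Fin 4 → ℝ, c0 0 ≠ 0 →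
      Filter.Tendsto (fun ℓ : ℕ => (4 : ℝ) ^ ℓ • (T ^ ℓ).mulVec c0)
        Filter.atTop (nhds (c0 0 • v)) := by
  intro _ _ c0 _
  change Tendsto (fun ℓ : ℕ => (4 : ℝ) ^ ℓ • (Coarsening.T ^ ℓ) *ᵥ c0) atTop
    (𝓝 (c0 0 • rightEigenvector 0))
  have hiterate (ℓ : ℕ) : (4 : ℝ) ^ ℓ • (Coarsening.T ^ ℓ) *ᵥ c0 =
      ∑ i, (4 * eigenvalue i) ^ ℓ • (projection i *ᵥ c0) := by
    rw [← smul_mulVec, ← smul_pow, four_smul_pow, sum_mulVec]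
    simp only [smul_mulVec]
  have hdecay : ∀ i ≠ 0, |4 * eigenvalue i| < 1 := by
    intro i hi
    fin_cases i
    · exact absurd rfl hi
    all_goals norm_num [eigenvalue, abs_of_pos]
  simpa only [hiterate, projection_zero_mulVec] using
    tendsto_sum_pow_smul_of_abs_lt_one _ (fun i => projection i *ᵥ c0) 0
      (by norm_num [eigenvalue]) hdecay
end

section
/- Consider the map on pairs (a, b) of real numbers with b > 0 given by Φ(a, b) = (a/2, b/4 + a²/(16b)), modelling the coarsening of (advection, diffusion), followed by time rescaling by factor 2: Ψ(a, b) = 2·Φ(a, b) = (a, b/2 + a²/(8b)). Then the fixed points of Ψ with b > 0 are exactly the pairs (a, |a|/2) for a ≠ 0. -/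
/-- The time-rescaled coarsening map `Ψ(a,b) = (a, b/2 + a²/(8b))` on pairs
with `b > 0` has fixed points exactly the pairs `(a, |a|/2)` with `a ≠ 0`. -/
theorem stmt15 (a b : ℝ) (hb : 0 < b) :
    ((a, b / 2 + a ^ 2 / (8 * b)) = (a, b)) ↔ (a ≠ 0 ∧ b = |a| / 2) := by
  rw [Prod.mk.injEq]
  constructor
  · rintro ⟨-, h⟩
    have hb' : b ≠ 0 := ne_of_gt hb
    have hsq : a ^ 2 = (2 * b) ^ 2 := by field_simp at h; nlinarith
    have habs : |a| = 2 * b := by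
      nlinarith [sq_abs a, abs_nonneg a]
    constructor
    · intro ha; rw [ha, abs_zero] at habs; linarith
    · rw [habs]; ring
  · rintro ⟨ha, rfl⟩
    have h : |a| > 0 := abs_pos.mpr ha
    refine ⟨rfl, ?_⟩
    have : a ^ 2 = |a| ^ 2 := (sq_abs a).symm
    field_simp
    nlinarith
end
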